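/- The visual boundary ∂DL_2(q) is not Hausdorff: there exist two distinct points of ∂DL_2(q) and a single sequence of points converging to both. -/

import Mathlib

/-!
For `s : ℕ` let `γ_s` be the geodesic ray of `DL_2(q)` going straight up in `T₀` (and down in
`T₁`) whose `T₀`-labels are `1` on the levels `[0, s)`. For `s < s'` the rays `γ_s`, `γ_s'` are not
asymptotic: their `T₀`-coordinates at time `t` differ at level `s`, so any path between them
descends to level `s` of `T₀` and `dist (γ_s t) (γ_s' t) ≥ 2 (t - s)`.

The ray `ρ_s^k` follows `γ_s` for `k` steps, then goes down in `T₀` and up in `T₁` along fresh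
labels. After time `2k` its `T₀`-coordinate lies at height `≤ 0`, below the levels where the
`γ_s` differ, so `ρ_0^k` and `ρ_1^k` coincide from then on and are asymptotic. Since `ρ_s^k → γ_s`
pointwise, the common class `[ρ_0^k] = [ρ_1^k]` converges to both `[γ_0] ≠ [γ_1]`.
-/

/-- A vertex of the (q+1)-regular tree with a distinguished end, in the
horocyclic model: a height `k ∈ ℤ` together with a finitely supported
labelling of the levels strictly below `k`. -/
structure TreeVert (q : ℕ) where
  height : ℤ
  labels : ℤ → ℕ
  labels_lt : ∀ n, labels n = 0 ∨ labels n < q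
  supp_below : ∀ n, height ≤ n → labels n = 0
  fin_supp : (Function.support labels).Finite

namespace DL

variable {q d : ℕ}

/-- `v` is a child of `u` (one step further from the distinguished end). -/
abbrev treeAdjUp (u v : TreeVert q) : Prop :=
  v.height = u.height + 1 ∧ ∀ n, n ≠ u.height → v.labels n = u.labels n

/-- The (q+1)-regular tree. -/
def TreeGraph (q : ℕ) : SimpleGraph (TreeVert q) where
  Adj u v := treeAdjUp u v ∨ treeAdjUp v u
  symm := ⟨fun u v h => Or.symm h⟩
  loopless := ⟨by
    intro u h
    rcases h with ⟨h1, _⟩ | ⟨h1, _⟩ <;> omega⟩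

/-- The base vertex of the tree. -/
def treeOrigin (q : ℕ) : TreeVert q :=
  ⟨0, fun _ => 0, fun _ => Or.inl rfl, fun _ _ => rfl, by simp⟩

/-- Vertices of the Diestel–Leader graph `DL_d(q)`:
`d`-tuples of tree vertices whose heights sum to zero. -/
def DLVert (d q : ℕ) : Type :=
  {x : Fin d → TreeVert q // (∑ i, (x i).height) = 0}

/-- The Diestel–Leader graph `DL_d(q)`: an edge ascends in one tree and
descends in another, all other coordinates being fixed. -/
def DLGraph (d q : ℕ) : SimpleGraph (DLVert d q) where
  Adj v w := ∃ i j : Fin d, i ≠ j ∧ treeAdjUp (v.1 i) (w.1 i) ∧ treeAdjUp (w.1 j) (v.1 j) ∧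
      ∀ k : Fin d, k ≠ i → k ≠ j → v.1 k = w.1 k
  symm := ⟨by
    rintro v w ⟨i, j, hij, h1, h2, h3⟩
    exact ⟨j, i, hij.symm, h2, h1, fun k hk1 hk2 => (h3 k hk2 hk1).symm⟩⟩
  loopless := ⟨by
    rintro v ⟨i, j, hij, ⟨h1, _⟩, _⟩
    omega⟩

/-- The base point of `DL_d(q)`. -/
def origin (d q : ℕ) : DLVert d q :=
  ⟨fun _ => treeOrigin q, by simp [treeOrigin]⟩

/-- A geodesic ray in `DL_d(q)` : an isometric embedding of `ℕ`. -/
def IsGeodesicRay (γ : ℕ → DLVert d q) : Prop :=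
  ∀ m n : ℕ, m ≤ n → (DLGraph d q).dist (γ m) (γ n) = n - m

/-- Two rays are asymptotic when they stay at uniformly bounded distance. -/
def Asymptotic (γ γ' : ℕ → DLVert d q) : Prop :=
  ∃ C : ℕ, ∀ n : ℕ, (DLGraph d q).dist (γ n) (γ' n) ≤ C

instance : TopologicalSpace (DLVert d q) := ⊥

/-- Geodesic rays emanating from the origin, with the topology of uniform
convergence on compact sets (= pointwise convergence, the vertex set being
discrete). -/
def RaySpace (d q : ℕ) : Type :=
  {γ : ℕ → DLVert d q // IsGeodesicRay γ ∧ γ 0 = origin d q}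

instance : TopologicalSpace (RaySpace d q) := by
  unfold RaySpace; infer_instance

lemma reachable_origin (γ : RaySpace d q) (n : ℕ) :
    (DLGraph d q).Reachable (origin d q) (γ.1 n) := by
  cases n with
  | zero => rw [γ.2.2]
  | succ n =>
    have h := γ.2.1 0 (n + 1) (Nat.zero_le _)
    have hne : (DLGraph d q).dist (γ.1 0) (γ.1 (n + 1)) ≠ 0 := by
      rw [h]; omega
    have := SimpleGraph.Reachable.of_dist_ne_zero hne
    rwa [γ.2.2] at this

/-- Asymptoticity as an equivalence relation on geodesic rays from the origin. -/
def asympSetoid (d q : ℕ) : Setoid (RaySpace d q) where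
  r γ γ' := Asymptotic γ.1 γ'.1
  iseqv := by
    constructor
    · intro γ
      exact ⟨0, fun n => by simp [SimpleGraph.dist_self]⟩
    · rintro γ γ' ⟨C, hC⟩
      exact ⟨C, fun n => by rw [SimpleGraph.dist_comm]; exact hC n⟩
    · rintro a b c ⟨C1, h1⟩ ⟨C2, h2⟩
      refine ⟨C1 + C2, fun n => ?_⟩
      have hab : (DLGraph d q).Reachable (a.1 n) (b.1 n) :=
        (reachable_origin a n).symm.trans (reachable_origin b n)
      have hbc : (DLGraph d q).Reachable (b.1 n) (c.1 n) :=
        (reachable_origin b n).symm.trans (reachable_origin c n)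
      obtain ⟨p, hp⟩ := hab.exists_walk_length_eq_dist
      obtain ⟨p', hp'⟩ := hbc.exists_walk_length_eq_dist
      calc (DLGraph d q).dist (a.1 n) (c.1 n) ≤ (p.append p').length :=
            SimpleGraph.dist_le _
        _ = (DLGraph d q).dist (a.1 n) (b.1 n) + (DLGraph d q).dist (b.1 n) (c.1 n) := by
            rw [SimpleGraph.Walk.length_append, hp, hp']
        _ ≤ C1 + C2 := Nat.add_le_add (h1 n) (h2 n)

/-- The visual boundary of `DL_d(q)`: asymptotic classes of geodesic rays
from the origin, with the quotient topology. -/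
def Boundary (d q : ℕ) : Type := Quotient (asympSetoid d q)

instance : TopologicalSpace (Boundary d q) := by
  unfold Boundary; infer_instance

/-- A ray in `DL_2(q)` descends for exactly `n` steps in tree `i`
(bottoming out at height `-n`), then ascends forever in tree `i`.
For `n = 0` this says the ray ascends forever in tree `i` with no turn. -/
def DescendsExactly (i : Fin 2) (n : ℕ) (γ : ℕ → DLVert 2 q) : Prop :=
  (∀ t : ℕ, t ≤ n → ((γ t).1 i).height = -(t : ℤ)) ∧
  (∀ t : ℕ, n ≤ t → ((γ t).1 i).height = (t : ℤ) - 2 * n)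

/-- The subset `C_n^i` of the boundary: classes of rays bottoming out in
tree `i` after descending exactly `n` edges. -/
def Cset (q : ℕ) (i : Fin 2) (n : ℕ) : Set (Boundary 2 q) :=
  {x | ∃ γ : RaySpace 2 q, Quotient.mk (asympSetoid 2 q) γ = x ∧ DescendsExactly i n γ.1}

/-- Projection of a path in `DL_d(q)` to the `i`-th tree. -/
def proj (i : Fin d) (γ : ℕ → DLVert d q) : ℕ → TreeVert q := fun n => (γ n).1 i

/-- Two (lazy) paths in the tree converge to the same end: both eventually
leave every ball, and they come within a uniformly bounded distance of each
other at arbitrarily late times. -/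
def SameEnd (a b : ℕ → TreeVert q) : Prop :=
  (∀ R : ℕ, ∃ N : ℕ, ∀ n, N ≤ n → R ≤ (TreeGraph q).dist (a 0) (a n)) ∧
  (∀ R : ℕ, ∃ N : ℕ, ∀ n, N ≤ n → R ≤ (TreeGraph q).dist (b 0) (b n)) ∧
  (∃ C : ℕ, ∀ N : ℕ, ∃ m n, N ≤ m ∧ N ≤ n ∧ (TreeGraph q).dist (a m) (b n) ≤ C)

/-- The step from `p m` to `p (m+1)` descends in tree `i`. -/
def StepDown (i : Fin d) (p : ℕ → DLVert d q) (m : ℕ) : Prop :=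
  treeAdjUp ((p (m + 1)).1 i) ((p m).1 i)

/-- The step from `p m` to `p (m+1)` ascends in tree `i`. -/
def StepUp (i : Fin d) (p : ℕ → DLVert d q) (m : ℕ) : Prop :=
  treeAdjUp ((p m).1 i) ((p (m + 1)).1 i)

/-- A turn in tree `i`: a subpath beginning with a descent in `T_i` at step `t`,
ending with an ascent in `T_i` at step `s`, with no intervening step
involving `T_i`. -/
def IsTurn (i : Fin d) (p : ℕ → DLVert d q) (t s : ℕ) : Prop :=
  t < s ∧ StepDown i p t ∧ StepUp i p s ∧
    ∀ m, t < m → m < s → (p (m + 1)).1 i = (p m).1 i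


open Filter Topology

section Walks

variable {d q : ℕ}

lemma height_le_of_adj {v w : DLVert d q} (h : (DLGraph d q).Adj v w) (i : Fin d) :
    (w.1 i).height ≤ (v.1 i).height + 1 := by
  obtain ⟨a, b, -, hup, hdown, hrest⟩ := h
  by_cases hia : i = a
  · subst hia; omega
  by_cases hib : i = b
  · subst hib; omega
  rw [hrest i hia hib]; omega

lemma labels_eq_of_adj {v w : DLVert d q} (h : (DLGraph d q).Adj v w) (i : Fin d) {L : ℤ}
    (hv : L < (v.1 i).height) (hw : L < (w.1 i).height) :
    (v.1 i).labels L = (w.1 i).labels L := by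
  obtain ⟨a, b, -, hup, hdown, hrest⟩ := h
  by_cases hia : i = a
  · subst hia; exact (hup.2 L hv.ne).symm
  by_cases hib : i = b
  · subst hib; exact hdown.2 L hw.ne
  rw [hrest i hia hib]

lemma height_sub_le_length {v w : DLVert d q} (p : (DLGraph d q).Walk v w) (i : Fin d) :
    (w.1 i).height - (v.1 i).height ≤ p.length := by
  induction p with
  | nil => simp
  | cons h p ih =>
    have := height_le_of_adj h i
    rw [SimpleGraph.Walk.length_cons]
    push_cast
    omega

lemma labels_eq_of_walk {v w : DLVert d q} (p : (DLGraph d q).Walk v w) (i : Fin d) {L : ℤ}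
    (h : ∀ u ∈ p.support, L < (u.1 i).height) :
    (v.1 i).labels L = (w.1 i).labels L := by
  induction p with
  | nil => rfl
  | cons hadj p ih =>
    rw [labels_eq_of_adj hadj i (h _ (by simp)) (h _ (by simp))]
    exact ih fun u hu => h u (List.mem_cons_of_mem _ hu)

/-- The walk must pass through level `L` of `T_i`. -/
lemma height_sub_add_height_sub_le_length_of_labels_ne {v w : DLVert d q}
    (p : (DLGraph d q).Walk v w) (i : Fin d) {L : ℤ}
    (h : (v.1 i).labels L ≠ (w.1 i).labels L) :
    ((v.1 i).height - L) + ((w.1 i).height - L) ≤ p.length := by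
  classical
  obtain ⟨u, hu, hle⟩ : ∃ u ∈ p.support, (u.1 i).height ≤ L := by
    by_contra! hc
    exact h (labels_eq_of_walk p i hc)
  have hsplit := congrArg SimpleGraph.Walk.length (p.take_spec hu)
  rw [SimpleGraph.Walk.length_append] at hsplit
  have hdown := height_sub_le_length (p.takeUntil u hu).reverse i
  have hup := height_sub_le_length (p.dropUntil u hu) i
  rw [SimpleGraph.Walk.length_reverse] at hdown
  omega

lemma exists_walk_length_of_adj {p : ℕ → DLVert d q}
    (hp : ∀ t, (DLGraph d q).Adj (p t) (p (t + 1))) (m k : ℕ) :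
    ∃ w : (DLGraph d q).Walk (p m) (p (m + k)), w.length = k := by
  induction k with
  | zero => exact ⟨.nil, rfl⟩
  | succ k ih =>
    obtain ⟨w, hw⟩ := ih
    exact ⟨w.concat (hp (m + k)), by rw [SimpleGraph.Walk.length_concat, hw]⟩

lemma isGeodesicRay_of_adj {p : ℕ → DLVert d q} (hp : ∀ t, (DLGraph d q).Adj (p t) (p (t + 1)))
    (hlen : ∀ m n : ℕ, m < n → ∀ w : (DLGraph d q).Walk (p m) (p n), (n : ℤ) - m ≤ w.length) :
    IsGeodesicRay p := by
  intro m n hmn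
  obtain ⟨k, rfl⟩ := Nat.exists_eq_add_of_le hmn
  obtain ⟨w, hw⟩ := exists_walk_length_of_adj hp m k
  have hle := SimpleGraph.dist_le w
  rcases k.eq_zero_or_pos with rfl | hk
  · simp
  obtain ⟨w', hw'⟩ := SimpleGraph.Reachable.exists_walk_length_eq_dist ⟨w⟩
  have := hlen m (m + k) (by omega) w'
  omega

end Walks

section RaySpace

variable {d q : ℕ}

lemma RaySpace.dist_origin (γ : RaySpace d q) (t : ℕ) :
    (DLGraph d q).dist (origin d q) (γ.1 t) = t := by
  have h := γ.2.1 0 t t.zero_le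
  rwa [γ.2.2, Nat.sub_zero] at h

/-- Before time `N` the rays are within `2N` of each other, through the origin. -/
lemma RaySpace.asymptotic_of_eq {γ γ' : RaySpace d q} (N : ℕ)
    (h : ∀ t, N ≤ t → γ.1 t = γ'.1 t) : Asymptotic γ.1 γ'.1 := by
  refine ⟨2 * N, fun t => ?_⟩
  rcases le_or_gt N t with hNt | htN
  · simp [h t hNt]
  calc (DLGraph d q).dist (γ.1 t) (γ'.1 t)
      ≤ (DLGraph d q).dist (γ.1 t) (origin d q) + (DLGraph d q).dist (origin d q) (γ'.1 t) :=
        (reachable_origin γ' t).dist_triangle_right _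
    _ = 2 * t := by rw [SimpleGraph.dist_comm, RaySpace.dist_origin, RaySpace.dist_origin]; ring
    _ ≤ 2 * N := by omega

lemma RaySpace.tendsto_nhds_iff {α : Type*} {l : Filter α} {p : α → RaySpace d q}
    {γ : RaySpace d q} :
    Tendsto p l (𝓝 γ) ↔ ∀ t, ∀ᶠ k in l, (p k).1 t = γ.1 t := by
  have : DiscreteTopology (DLVert d q) := ⟨rfl⟩
  have hemb : IsEmbedding (Subtype.val : RaySpace d q → ℕ → DLVert d q) := .subtypeVal
  refine hemb.tendsto_nhds_iff.trans ?_
  simp only [tendsto_pi_nhds, nhds_discrete, tendsto_pure]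
  rfl

end RaySpace

section Stripes

variable {q : ℕ} (hq : 1 < q)

def stripe (a b h : ℤ) : TreeVert q where
  height := h
  labels n := if a ≤ n ∧ n < min b h then 1 else 0
  labels_lt n := by split_ifs <;> simp [hq]
  supp_below n hn := if_neg (by omega)
  fin_supp := (Set.finite_Ico a b).subset fun n hn => by
    by_contra hc
    exact hn (if_neg (by rw [Set.mem_Ico] at hc; omega))

variable {hq}

@[simp] lemma stripe_height (a b h : ℤ) : (stripe hq a b h).height = h := rfl

lemma stripe_labels (a b h n : ℤ) :
    (stripe hq a b h).labels n = if a ≤ n ∧ n < min b h then 1 else 0 := rfl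

lemma stripe_congr {a b h a' b' h' : ℤ} (hh : h = h')
    (hl : ∀ n, a ≤ n ∧ n < min b h ↔ a' ≤ n ∧ n < min b' h') :
    stripe hq a b h = stripe hq a' b' h' := by
  subst hh
  unfold stripe
  congr 1
  funext n
  exact if_congr (hl n) rfl rfl

lemma treeAdjUp_stripe {a b h a' b' h' : ℤ} (hh : h' = h + 1)
    (hl : ∀ n, n ≠ h → (a ≤ n ∧ n < min b h ↔ a' ≤ n ∧ n < min b' h')) :
    treeAdjUp (stripe hq a b h) (stripe hq a' b' h') :=
  ⟨hh, fun n hn => by simp only [stripe, hl n hn]⟩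

lemma stripe_eq_treeOrigin {a b : ℤ} (h : ∀ n, ¬ (a ≤ n ∧ n < min b 0)) :
    stripe hq a b 0 = treeOrigin q := by
  unfold stripe treeOrigin
  congr 1
  funext n
  exact if_neg (h n)

variable (hq)

def dlStripe (a₀ b₀ a₁ b₁ h : ℤ) : DLVert 2 q :=
  ⟨![stripe hq a₀ b₀ h, stripe hq a₁ b₁ (-h)], by simp⟩

variable {hq}

@[simp] lemma dlStripe_zero (a₀ b₀ a₁ b₁ h : ℤ) :
    (dlStripe hq a₀ b₀ a₁ b₁ h).1 0 = stripe hq a₀ b₀ h := rfl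

@[simp] lemma dlStripe_one (a₀ b₀ a₁ b₁ h : ℤ) :
    (dlStripe hq a₀ b₀ a₁ b₁ h).1 1 = stripe hq a₁ b₁ (-h) := rfl

lemma dlStripe_congr {a₀ b₀ a₁ b₁ h a₀' b₀' a₁' b₁' h' : ℤ} (hh : h = h')
    (hl₀ : ∀ n, a₀ ≤ n ∧ n < min b₀ h ↔ a₀' ≤ n ∧ n < min b₀' h')
    (hl₁ : ∀ n, a₁ ≤ n ∧ n < min b₁ (-h) ↔ a₁' ≤ n ∧ n < min b₁' (-h')) :
    dlStripe hq a₀ b₀ a₁ b₁ h = dlStripe hq a₀' b₀' a₁' b₁' h' := by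
  refine Subtype.ext (funext fun i => ?_)
  fin_cases i
  · exact stripe_congr (hq := hq) hh hl₀
  · exact stripe_congr (hq := hq) (by rw [hh]) hl₁

lemma dlStripe_adj {a₀ b₀ a₁ b₁ h a₀' b₀' a₁' b₁' h' : ℤ} (hh : h' = h + 1)
    (hl₀ : ∀ n, n ≠ h → (a₀ ≤ n ∧ n < min b₀ h ↔ a₀' ≤ n ∧ n < min b₀' h'))
    (hl₁ : ∀ n, n ≠ -h' → (a₁' ≤ n ∧ n < min b₁' (-h') ↔ a₁ ≤ n ∧ n < min b₁ (-h))) :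
    (DLGraph 2 q).Adj (dlStripe hq a₀ b₀ a₁ b₁ h) (dlStripe hq a₀' b₀' a₁' b₁' h') :=
  ⟨0, 1, by decide, treeAdjUp_stripe (hq := hq) hh hl₀,
    treeAdjUp_stripe (hq := hq) (by omega) hl₁, fun k hk₀ hk₁ => by fin_cases k <;> simp_all⟩

lemma dlStripe_eq_origin {a₀ b₀ a₁ b₁ : ℤ} (h₀ : ∀ n, ¬ (a₀ ≤ n ∧ n < min b₀ 0))
    (h₁ : ∀ n, ¬ (a₁ ≤ n ∧ n < min b₁ 0)) :
    dlStripe hq a₀ b₀ a₁ b₁ 0 = origin 2 q := by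
  refine Subtype.ext (funext fun i => ?_)
  fin_cases i
  · exact stripe_eq_treeOrigin (hq := hq) h₀
  · exact stripe_eq_treeOrigin (hq := hq) h₁

end Stripes

section Rays

variable {q : ℕ} (hq : 1 < q)

/-- The ray `γ_s`. -/
def straightPath (s : ℕ) (t : ℕ) : DLVert 2 q := dlStripe hq 0 s 0 0 t

/-- The ray `ρ_s^k`, with fresh `T₁`-labels `1` from level `-k` on. -/
def turningPath (s k : ℕ) (t : ℕ) : DLVert 2 q :=
  dlStripe hq 0 s (-k) (t - 2 * k) (min t (2 * k - t))

variable {hq}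

lemma straightPath_isGeodesicRay (s : ℕ) : IsGeodesicRay (straightPath hq s) := by
  refine isGeodesicRay_of_adj (fun t => dlStripe_adj (by push_cast; ring)
    (fun n _ => by omega) (fun n _ => by omega)) fun m n _ w => ?_
  exact height_sub_le_length w 0

lemma turningPath_adj (s k t : ℕ) :
    (DLGraph 2 q).Adj (turningPath hq s k t) (turningPath hq s k (t + 1)) := by
  rcases lt_or_ge t k with htk | hkt
  · exact dlStripe_adj (by omega) (fun n _ => by omega) (fun n _ => by omega)
  · exact (dlStripe_adj (by omega) (fun n _ => by omega) (fun n _ => by omega)).symm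

/-- Between times `m < k < n` the ray passes through level `-k` of `T₁`, where the labels at
times `m` and `n` differ. -/
lemma turningPath_isGeodesicRay (s k : ℕ) : IsGeodesicRay (turningPath hq s k) := by
  refine isGeodesicRay_of_adj (turningPath_adj s k) fun m n hmn w => ?_
  rcases le_or_gt n k with hnk | hkn
  · have := height_sub_le_length w 0
    change min (n : ℤ) (2 * k - n) - min (m : ℤ) (2 * k - m) ≤ _ at this
    omega
  rcases le_or_gt k m with hkm | hmk
  · have := height_sub_le_length w 1
    change -min (n : ℤ) (2 * k - n) - -min (m : ℤ) (2 * k - m) ≤ _ at this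
    omega
  have hne :
      ((turningPath hq s k m).1 1).labels (-k) ≠ ((turningPath hq s k n).1 1).labels (-k) := by
    simp only [turningPath, dlStripe_one, stripe_labels]
    rw [if_neg (by omega), if_pos (by omega)]
    omega
  have := height_sub_add_height_sub_le_length_of_labels_ne w 1 hne
  change (-min (m : ℤ) (2 * k - m) - -k) + (-min (n : ℤ) (2 * k - n) - -k) ≤ _ at this
  omega

variable (hq)

def straightRay (s : ℕ) : RaySpace 2 q :=
  ⟨straightPath hq s, straightPath_isGeodesicRay s,
    dlStripe_eq_origin (fun n => by omega) (fun n => by omega)⟩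

def turningRay (s k : ℕ) : RaySpace 2 q :=
  ⟨turningPath hq s k, turningPath_isGeodesicRay s k,
    dlStripe_eq_origin (fun n => by omega) (fun n => by omega)⟩

variable {hq}

lemma straightRay_not_asymptotic {s s' : ℕ} (hs : s < s') :
    ¬ Asymptotic (straightRay hq s).1 (straightRay hq s').1 := by
  rintro ⟨C, hC⟩
  set t := C + s + 1
  obtain ⟨w, hw⟩ := ((reachable_origin (straightRay hq s) t).symm.trans
    (reachable_origin (straightRay hq s') t)).exists_walk_length_eq_dist
  have hne : ((straightPath hq s t).1 0).labels s ≠ ((straightPath hq s' t).1 0).labels s := by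
    simp only [straightPath, dlStripe_zero, stripe_labels]
    rw [if_neg (by omega), if_pos (by omega)]
    omega
  have hlen := height_sub_add_height_sub_le_length_of_labels_ne w 0 hne
  change ((t : ℤ) - s) + (t - s) ≤ _ at hlen
  have := hC t
  omega

lemma turningRay_asymptotic (s s' k : ℕ) :
    Asymptotic (turningRay hq s k).1 (turningRay hq s' k).1 :=
  RaySpace.asymptotic_of_eq (2 * k) fun _ _ =>
    dlStripe_congr rfl (fun n => by omega) (fun n => Iff.rfl)

lemma tendsto_turningRay (s : ℕ) :
    Tendsto (turningRay hq s) atTop (𝓝 (straightRay hq s)) :=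
  RaySpace.tendsto_nhds_iff.2 fun t => eventually_atTop.2
    ⟨t, fun _ _ => dlStripe_congr (by omega) (fun n => by omega) (fun n => by omega)⟩

end Rays

/-- the visual boundary of `DL_2(q)` is not Hausdorff: there are
two distinct points and a single sequence converging to both. -/
theorem boundary_not_hausdorff {q : ℕ} (hq : 2 ≤ q) :
    ¬ T2Space (Boundary 2 q) ∧
    ∃ x y : Boundary 2 q, x ≠ y ∧ ∃ u : ℕ → Boundary 2 q,
      Filter.Tendsto u Filter.atTop (nhds x) ∧
      Filter.Tendsto u Filter.atTop (nhds y) := by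
  let π : RaySpace 2 q → Boundary 2 q := Quotient.mk (asympSetoid 2 q)
  have hπ : Continuous π := continuous_quotient_mk'
  have hxy : π (straightRay hq 0) ≠ π (straightRay hq 1) := fun h =>
    straightRay_not_asymptotic zero_lt_one (Quotient.exact h)
  have hu : (fun k => π (turningRay hq 0 k)) = fun k => π (turningRay hq 1 k) :=
    funext fun k => Quotient.sound (turningRay_asymptotic 0 1 k)
  have hx := (hπ.tendsto _).comp (tendsto_turningRay (hq := hq) 0)
  have hy := (hπ.tendsto _).comp (tendsto_turningRay (hq := hq) 1)
  rw [Function.comp_def, ← hu] at hy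
  exact ⟨fun _ => hxy (tendsto_nhds_unique hx hy), _, _, hxy, _, hx, hy⟩

end DL
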